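/- For any f ∈ H, any m ∈ I_N, and any z ∈ ℂᴺ, one has |⟨y, vₘ⟩| ≤ √σₘ ‖f − T_N z‖ + σₘ ‖z‖, where y = T_N* f. -/

import Mathlib

open scoped ComplexInnerProductSpace

/-!
Write `⟪v_m, T* f⟫ = ⟪T v_m, f⟫ = ⟪T v_m, f - T z⟫ + ⟪T v_m, T z⟫`. Since `T* T = G` and `v_m` is a
unit eigenvector of `G`, `⟪T v_m, T z⟫ = σ_m ⟪v_m, z⟫` and `‖T v_m‖² = σ_m`; Cauchy–Schwarz then
bounds the two terms by `√σ_m ‖f - T z‖` and `σ_m ‖z‖`.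
-/

section Synthesis

variable {ι 𝕜 E : Type*} [Fintype ι] [RCLike 𝕜] [NormedAddCommGroup E] [InnerProductSpace 𝕜 E]

lemma inner_sum_smul_left_eq_inner (φ : ι → E) (u : EuclideanSpace 𝕜 ι) {f : E}
    {y : EuclideanSpace 𝕜 ι} (hy : ∀ n, y n = inner 𝕜 (φ n) f) :
    inner 𝕜 (∑ n, u n • φ n) f = inner 𝕜 u y := by
  simp only [sum_inner, inner_smul_left, PiLp.inner_apply, RCLike.inner_apply, hy, mul_comm]

lemma inner_sum_smul_right_eq_mulVec {φ : ι → E} {G : Matrix ι ι 𝕜}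
    (hG : ∀ m k, G m k = inner 𝕜 (φ m) (φ k)) (w : ι → 𝕜) (n : ι) :
    inner 𝕜 (φ n) (∑ k, w k • φ k) = G.mulVec w n := by
  simp only [inner_sum, inner_smul_right, Matrix.mulVec, dotProduct, hG, mul_comm]

lemma inner_sum_smul_of_mulVec_eq_smul {φ : ι → E} {G : Matrix ι ι 𝕜}
    (hG : ∀ m k, G m k = inner 𝕜 (φ m) (φ k)) {σ : 𝕜} {v : EuclideanSpace 𝕜 ι}
    (heig : ∀ i, G.mulVec v i = σ * v i) (z : EuclideanSpace 𝕜 ι) :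
    inner 𝕜 (∑ n, z n • φ n) (∑ n, v n • φ n) = σ * inner 𝕜 z v := by
  rw [inner_sum_smul_left_eq_inner φ z (y := σ • v), inner_smul_right]
  intro n
  rw [inner_sum_smul_right_eq_mulVec hG, heig, PiLp.smul_apply, smul_eq_mul]

end Synthesis

theorem stmt_12_general {H : Type*} [NormedAddCommGroup H] [InnerProductSpace ℂ H]
    {N : ℕ} (φ : Fin N → H) (σ : Fin N → ℝ)
    (v : Fin N → EuclideanSpace ℂ (Fin N)) (hv : Orthonormal ℂ v)
    (G : Matrix (Fin N) (Fin N) ℂ) (hG : ∀ m k, G m k = ⟪φ m, φ k⟫)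
    (heig : ∀ n i, G.mulVec (fun j => v n j) i = (σ n : ℂ) * v n i)
    (T : EuclideanSpace ℂ (Fin N) → H) (hT : ∀ z, T z = ∑ n, z n • φ n)
    (f : H) (y : EuclideanSpace ℂ (Fin N)) (hy : ∀ n, y n = ⟪φ n, f⟫)
    (m : Fin N) (z : EuclideanSpace ℂ (Fin N)) :
    ‖⟪v m, y⟫‖ ≤ Real.sqrt (σ m) * ‖f - T z‖ + σ m * ‖z‖ := by
  have hcross (u : EuclideanSpace ℂ (Fin N)) : ⟪T u, T (v m)⟫ = σ m * ⟪u, v m⟫ := by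
    rw [hT, hT]
    exact inner_sum_smul_of_mulVec_eq_smul hG (heig m) u
  have hnorm_sq : ‖T (v m)‖ ^ 2 = σ m := by
    rw [@norm_sq_eq_re_inner ℂ, hcross, inner_self_eq_norm_sq_to_K, hv.1 m]
    simp
  have hσ : 0 ≤ σ m := hnorm_sq ▸ sq_nonneg _
  have hnorm : ‖T (v m)‖ = Real.sqrt (σ m) := by
    rw [← hnorm_sq, Real.sqrt_sq (norm_nonneg _)]
  calc ‖⟪v m, y⟫‖ = ‖⟪T (v m), f - T z⟫ + ⟪T (v m), T z⟫‖ := by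
        rw [← inner_add_right, sub_add_cancel, hT, inner_sum_smul_left_eq_inner φ _ hy]
    _ ≤ ‖T (v m)‖ * ‖f - T z‖ + σ m * (‖z‖ * ‖v m‖) := by
        refine norm_add_le_of_le (norm_inner_le_norm _ _) ?_
        rw [norm_inner_symm, hcross, norm_mul, Complex.norm_real, Real.norm_of_nonneg hσ]
        exact mul_le_mul_of_nonneg_left (norm_inner_le_norm _ _) hσ
    _ = Real.sqrt (σ m) * ‖f - T z‖ + σ m * ‖z‖ := by
        rw [hnorm, hv.1 m, mul_one]

theorem stmt_12 {H : Type*} [NormedAddCommGroup H] [InnerProductSpace ℂ H]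
    {N : ℕ} (φ : Fin N → H) (σ : Fin N → ℝ)
    (v : Fin N → EuclideanSpace ℂ (Fin N)) (hv : Orthonormal ℂ v)
    (G : Matrix (Fin N) (Fin N) ℂ) (hG : ∀ m k, G m k = ⟪φ m, φ k⟫)
    (heig : ∀ n i, G.mulVec (fun j => v n j) i = (σ n : ℂ) * v n i)
    (T : EuclideanSpace ℂ (Fin N) → H) (hT : ∀ z, T z = ∑ n, z n • φ n)
    (ξ : Fin N → H) (hξ : ∀ n, ξ n = T (v n))
    (hσ : ∀ n, 0 ≤ σ n)
    (f : H) (y : EuclideanSpace ℂ (Fin N)) (hy : ∀ n, y n = ⟪φ n, f⟫)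
    (m : Fin N) (z : EuclideanSpace ℂ (Fin N)) :
    ‖⟪v m, y⟫‖ ≤ Real.sqrt (σ m) * ‖f - T z‖ + σ m * ‖z‖ :=
  stmt_12_general φ σ v hv G hG heig T hT f y hy m z
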